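/- (IQ function is the integral of the single-agent Q function) Let S, A be finite, P : S × A → P(S), r : S × A → ℝ bounded, γ ∈ (0,1). Let Q_single : S × A → ℝ be the unique bounded solution of Q_single(s,a) = r(s,a) + γ ∑_{s'} P(s,a,s') max_{a'} Q_single(s',a'). Define Q̃(μ,h) = ∑_{s} μ(s) ∑_{a} h(s)(a) Q_single(s,a) on P(S) × H where H = {h : S → P(A)}. Then Q̃ satisfies the lifted Bellman equation Q̃(μ,h) = r̂(μ,h) + γ·sup_{h'∈H} Q̃(Φ(μ,h), h'), where r̂(μ,h) = ∑_s μ(s) ∑_a h(s)(a) r(s,a) and Φ(μ,h)(s') = ∑_s μ(s) ∑_a h(s)(a) P(s,a,s'). -/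
import Mathlib


open scoped BigOperators

/-- IQ function is the integral of the single-agent Q function:
if `Q_single` solves the single-agent Bellman equation, then
`Q̃(μ,h) = ∑_s μ(s) ∑_a h(s)(a) Q_single(s,a)` solves the lifted Bellman equation
`Q̃(μ,h) = r̂(μ,h) + γ sup_{h'∈H} Q̃(Φ(μ,h), h')`. -/
theorem stmt_10 {S A : Type*} [Fintype S] [Fintype A] [Nonempty A]
    (γ : ℝ) (hγ0 : 0 < γ) (hγ1 : γ < 1)
    (P : S → A → S → ℝ) (hP : ∀ x a, (∀ y, 0 ≤ P x a y) ∧ ∑ y, P x a y = 1)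
    (r : S → A → ℝ) (rmax : ℝ) (hr : ∀ x a, |r x a| ≤ rmax)
    (Qs : S → A → ℝ)
    (hQs : ∀ x a, Qs x a = r x a + γ * ∑ y, P x a y * ⨆ a', Qs y a') :
    ∀ (μ : S → ℝ) (h : S → A → ℝ),
      ((∀ x, 0 ≤ μ x) ∧ ∑ x, μ x = 1) →
      (∀ x, (∀ a, 0 ≤ h x a) ∧ ∑ a, h x a = 1) →
      (∑ x, μ x * ∑ a, h x a * Qs x a) =
        (∑ x, μ x * ∑ a, h x a * r x a) +
          γ * ⨆ h' : {h' : S → A → ℝ // ∀ x, (∀ a, 0 ≤ h' x a) ∧ ∑ a, h' x a = 1},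
            ∑ y, (∑ x, μ x * ∑ a, h x a * P x a y) * ∑ a', h'.1 y a' * Qs y a' := by
  intro μ h hμ hh
  classical
  have hmax : ∀ y : S, ∃ a0 : A, ∀ a, Qs y a ≤ Qs y a0 := by
    intro y; exact Finite.exists_max (Qs y)
  choose a0 ha0 using hmax
  have hsupeq : ∀ y : S, (⨆ a', Qs y a') = Qs y (a0 y) := by
    intro y
    exact le_antisymm (ciSup_le (ha0 y)) (le_ciSup (Set.Finite.bddAbove (Set.finite_range _)) (a0 y))
  set Φ : S → ℝ := fun y => ∑ x, μ x * ∑ a, h x a * P x a y with hΦ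
  have hΦ0 : ∀ y, 0 ≤ Φ y := by
    intro y
    apply Finset.sum_nonneg; intro x _
    exact mul_nonneg (hμ.1 x)
      (Finset.sum_nonneg fun a _ => mul_nonneg ((hh x).1 a) ((hP x a).1 y))
  have hub : ∀ h' : {h' : S → A → ℝ // ∀ x, (∀ a, 0 ≤ h' x a) ∧ ∑ a, h' x a = 1},
      (∑ y, Φ y * ∑ a', h'.1 y a' * Qs y a') ≤ ∑ y, Φ y * Qs y (a0 y) := by
    intro h'
    apply Finset.sum_le_sum
    intro y _
    refine mul_le_mul_of_nonneg_left ?_ (hΦ0 y)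
    calc ∑ a', h'.1 y a' * Qs y a' ≤ ∑ a', h'.1 y a' * Qs y (a0 y) :=
          Finset.sum_le_sum fun a _ => mul_le_mul_of_nonneg_left (ha0 y a) ((h'.2 y).1 a)
      _ = Qs y (a0 y) := by rw [← Finset.sum_mul, (h'.2 y).2, one_mul]
  have hmem : (∀ x, (∀ a, 0 ≤ (fun y a => if a = a0 y then (1:ℝ) else 0) x a) ∧
      ∑ a, (fun y a => if a = a0 y then (1:ℝ) else 0) x a = 1) := by
    intro x
    constructor
    · intro a; dsimp only; split <;> norm_num
    · simp
  have hval : (∑ y, Φ y * ∑ a', (if a' = a0 y then (1:ℝ) else 0) * Qs y a')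
      = ∑ y, Φ y * Qs y (a0 y) := by
    apply Finset.sum_congr rfl
    intro y _
    congr 1
    simp [ite_mul]
  haveI : Nonempty {h' : S → A → ℝ // ∀ x, (∀ a, 0 ≤ h' x a) ∧ ∑ a, h' x a = 1} :=
    ⟨⟨fun y a => if a = a0 y then (1:ℝ) else 0, hmem⟩⟩
  have key : (⨆ h' : {h' : S → A → ℝ // ∀ x, (∀ a, 0 ≤ h' x a) ∧ ∑ a, h' x a = 1},
      ∑ y, Φ y * ∑ a', h'.1 y a' * Qs y a') = ∑ y, Φ y * Qs y (a0 y) := by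
    apply le_antisymm (ciSup_le hub)
    have hle := le_ciSup (f := fun h' : {h' : S → A → ℝ // ∀ x, (∀ a, 0 ≤ h' x a) ∧ ∑ a, h' x a = 1} =>
      ∑ y, Φ y * ∑ a', h'.1 y a' * Qs y a')
      (⟨∑ y, Φ y * Qs y (a0 y), by rintro _ ⟨h', rfl⟩; exact hub h'⟩ : BddAbove _)
      ⟨fun y a => if a = a0 y then (1:ℝ) else 0, hmem⟩
    calc ∑ y, Φ y * Qs y (a0 y)
        = ∑ y, Φ y * ∑ a', (if a' = a0 y then (1:ℝ) else 0) * Qs y a' := hval.symm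
      _ ≤ _ := hle
  rw [key]
  calc ∑ x, μ x * ∑ a, h x a * Qs x a
      = ∑ x, μ x * ∑ a, h x a * (r x a + γ * ∑ y, P x a y * Qs y (a0 y)) := by
        refine Finset.sum_congr rfl fun x _ => ?_
        congr 1
        refine Finset.sum_congr rfl fun a _ => ?_
        rw [hQs x a]
        simp only [hsupeq]
    _ = (∑ x, μ x * ∑ a, h x a * r x a) + γ * ∑ y, Φ y * Qs y (a0 y) := by
        simp only [hΦ, mul_add, Finset.sum_add_distrib, Finset.mul_sum, Finset.sum_mul]
        congr 1
        conv_rhs => rw [Finset.sum_comm]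
        refine Finset.sum_congr rfl fun x _ => ?_
        rw [Finset.sum_comm]
        refine Finset.sum_congr rfl fun y _ => ?_
        refine Finset.sum_congr rfl fun a _ => ?_
        ring
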